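/- arXiv:1907.05622 — 2 statements merged into one kernel-verified Lean document; each statement's English description precedes it below -/
import Mathlib

section
/- Let u be a degree-d monomial in n variables with u ≠ x_1^d. Then max(pred(u)) = n if λ(u)^2 divides u, and max(pred(u)) = max(u) − 1 otherwise, where λ(u) = x_{max(u)}. -/
/-- Lexicographic "strictly greater" on exponent vectors of monomials:
the leftmost nonzero coordinate of `a - b` is positive. -/
def LexGT {n : ℕ} (a b : Fin n → ℕ) : Prop :=
  ∃ i : Fin n, (∀ j : Fin n, j < i → a j = b j) ∧ b i < a i

/-- Lexicographic "greater or equal". -/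
def LexGE {n : ℕ} (a b : Fin n → ℕ) : Prop := LexGT a b ∨ a = b

/-- Total degree of a monomial given by its exponent vector. -/
def deg {n : ℕ} (a : Fin n → ℕ) : ℕ := ∑ i, a i

/-- The lexsegment `L(u)`: all monomials of the same degree that are `≥_lex u`. -/
def Lseg {n : ℕ} (u : Fin n → ℕ) : Set (Fin n → ℕ) :=
  {v | deg v = deg u ∧ LexGE v u}

/-- The half-open lexinterval `L*(u₁,u₂) = {v : u₁ >_lex v ≥_lex u₂}`. -/
def Lstar {n : ℕ} (u₁ u₂ : Fin n → ℕ) : Set (Fin n → ℕ) :=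
  {v | deg v = deg u₁ ∧ LexGT u₁ v ∧ LexGE v u₂}

/-- The elementary Borel move `u ↦ x_i · u / x_j`. -/
def move {n : ℕ} (u : Fin n → ℕ) (i j : Fin n) : Fin n → ℕ :=
  fun k => u k + (if k = i then 1 else 0) - (if k = j then 1 else 0)

/-- A set of monomials is Borel-stable (strongly stable). -/
def BorelStable {n : ℕ} (B : Set (Fin n → ℕ)) : Prop :=
  ∀ u ∈ B, ∀ i j : Fin n, i ≤ j → 1 ≤ u j → move u i j ∈ B

/-- `B(u)`: the smallest Borel-stable set of monomials containing `u`. -/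
def borelSet {n : ℕ} (u : Fin n → ℕ) : Set (Fin n → ℕ) :=
  ⋂₀ {B : Set (Fin n → ℕ) | BorelStable B ∧ u ∈ B}

/-- The gaps of `u`: `L(u) \ B(u)`. -/
def gaps {n : ℕ} (u : Fin n → ℕ) : Set (Fin n → ℕ) := Lseg u \ borelSet u

/-- `max(u)`: the largest (1-based) index of a variable dividing `u` (0 if `u = 1`). -/
def maxIdx {n : ℕ} (u : Fin n → ℕ) : ℕ :=
  (Finset.univ.filter fun i : Fin n => 0 < u i).sup fun i => (i : ℕ) + 1

/-- `min(u)`: the smallest (1-based) index of a variable dividing `u`. -/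
noncomputable def minIdx {n : ℕ} (u : Fin n → ℕ) : ℕ :=
  sInf {m | ∃ i : Fin n, 0 < u i ∧ m = (i : ℕ) + 1}

/-- The maxgen monomial of a set `B` of monomials: its exponent at `i`
is the number of `w ∈ B` with `max(w) = i+1` (1-based). -/
noncomputable def maxgen {n : ℕ} (B : Set (Fin n → ℕ)) : Fin n → ℕ :=
  fun i => (B ∩ {w | maxIdx w = (i : ℕ) + 1}).ncard

/-- `w` is the immediate lexicographic predecessor of `u` among monomials
of the same degree: the least monomial strictly greater than `u`. -/
def IsPred {n : ℕ} (w u : Fin n → ℕ) : Prop :=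
  deg w = deg u ∧ LexGT w u ∧
    ∀ z : Fin n → ℕ, deg z = deg u → LexGT z u → LexGE z w

/-- `w` is the immediate lexicographic successor of `u` among monomials
of the same degree: the greatest monomial strictly smaller than `u`. -/
def IsSucc {n : ℕ} (w u : Fin n → ℕ) : Prop :=
  deg w = deg u ∧ LexGT u w ∧
    ∀ z : Fin n → ℕ, deg z = deg u → LexGT u z → LexGE w z

lemma lexGT_asymm {n : ℕ} {a b : Fin n → ℕ} (h : LexGT a b) (h' : LexGT b a) : False := by
  obtain ⟨i, hpre, hi⟩ := h
  obtain ⟨i', hpre', hi'⟩ := h'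
  rcases lt_trichotomy i i' with hlt | heq | hgt
  · have := hpre' i hlt; omega
  · subst heq; omega
  · have := hpre i' hgt; omega

lemma deg_update {n : ℕ} (f : Fin n → ℕ) (i : Fin n) (b : ℕ) :
    deg (Function.update f i b) = b + (deg f - f i) := by
  classical
  unfold deg
  rw [Finset.sum_update_of_mem (Finset.mem_univ i)]
  rw [Finset.sdiff_singleton_eq_erase]
  have h := Finset.add_sum_erase Finset.univ f (Finset.mem_univ i)
  omega

lemma deg_split {n : ℕ} (f : Fin n → ℕ) (i : Fin n) :
    deg f = (∑ j ∈ Finset.univ.filter (fun j => j < i), f j) + f i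
      + (∑ j ∈ Finset.univ.filter (fun j => i < j), f j) := by
  classical
  have h1 : (Finset.univ.filter (fun j : Fin n => ¬ j < i)) =
      insert i (Finset.univ.filter (fun j => i < j)) := by
    ext j
    simp only [Finset.mem_filter, Finset.mem_insert, Finset.mem_univ, true_and, not_lt]
    constructor
    · intro h; rcases eq_or_lt_of_le h with h | h
      · exact Or.inl h.symm
      · exact Or.inr h
    · rintro (rfl | h)
      · exact le_refl _
      · exact le_of_lt h
  have h2 := Finset.sum_filter_add_sum_filter_not Finset.univ (fun j : Fin n => j < i) f
  rw [h1, Finset.sum_insert (by simp)] at h2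
  unfold deg
  omega

lemma maxIdx_eq {n : ℕ} (f : Fin n → ℕ) (i : Fin n) (h : 0 < f i)
    (h2 : ∀ j, 0 < f j → j ≤ i) : maxIdx f = (i : ℕ) + 1 := by
  unfold maxIdx
  apply le_antisymm
  · apply Finset.sup_le
    intro j hj
    simp only [Finset.mem_filter] at hj
    have := h2 j hj.2
    have : (j : ℕ) ≤ (i : ℕ) := this
    omega
  · exact Finset.le_sup (f := fun i : Fin n => (i : ℕ) + 1) (Finset.mem_filter.mpr ⟨Finset.mem_univ i, h⟩)

/-- for `u ≠ x_1^d`, `max(pred(u)) = n` if `λ(u)² ∣ u`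
and `max(pred(u)) = max(u) - 1` otherwise. -/
theorem stmt7 {n d : ℕ} (hn : 2 ≤ n) (u w : Fin n → ℕ) (hu : deg u = d)
    (hne : u ≠ Pi.single (⟨0, by omega⟩ : Fin n) d)
    (m : Fin n) (hm : maxIdx u = (m : ℕ) + 1)
    (hw : IsPred w u) :
    maxIdx w = if 2 ≤ u m then n else maxIdx u - 1 := by
  classical
  have hMn : (m : ℕ) < n := m.isLt
  -- every positive coordinate has index ≤ m
  have hmax : ∀ j : Fin n, 0 < u j → (j : ℕ) ≤ (m : ℕ) := by
    intro j hj
    have h1 : (j : ℕ) + 1 ≤ maxIdx u :=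
      Finset.le_sup (f := fun i : Fin n => (i : ℕ) + 1)
        (Finset.mem_filter.mpr ⟨Finset.mem_univ j, hj⟩)
    omega
  have hzero : ∀ j : Fin n, (m : ℕ) < (j : ℕ) → u j = 0 := by
    intro j hj
    by_contra h
    have := hmax j (Nat.pos_of_ne_zero h)
    omega
  have hum : 0 < u m := by
    have hne0 : (Finset.univ.filter fun i : Fin n => 0 < u i).Nonempty := by
      by_contra hemp
      rw [Finset.not_nonempty_iff_eq_empty] at hemp
      unfold maxIdx at hm
      rw [hemp] at hm
      simp at hm
    obtain ⟨j, hjmem, hjeq⟩ :=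
      Finset.exists_mem_eq_sup _ hne0 (fun i : Fin n => (i : ℕ) + 1)
    have hj : (m : ℕ) + 1 = (j : ℕ) + 1 := by
      rw [← hm]; unfold maxIdx; exact hjeq
    have : j = m := by
      apply Fin.ext; omega
    subst this
    exact (Finset.mem_filter.mp hjmem).2
  have hM1 : 1 ≤ (m : ℕ) := by
    by_contra h
    apply hne
    have hm0 : (m : ℕ) = 0 := by omega
    funext j
    by_cases hj : j = (⟨0, by omega⟩ : Fin n)
    · subst hj
      rw [Pi.single_eq_same, ← hu]
      unfold deg
      rw [Finset.sum_eq_single_of_mem (⟨0, by omega⟩ : Fin n) (Finset.mem_univ _)]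
      intro b _ hb
      by_contra hb'
      have := hmax b (Nat.pos_of_ne_zero hb')
      exact hb (Fin.ext (by show (b : ℕ) = 0; omega))
    · rw [Pi.single_eq_of_ne hj]
      by_contra h'
      have := hmax j (Nat.pos_of_ne_zero h')
      exact hj (Fin.ext (by show (j : ℕ) = 0; omega))
  set m' : Fin n := ⟨(m : ℕ) - 1, by omega⟩ with hm'def
  set lastI : Fin n := ⟨n - 1, by omega⟩ with hlastdef
  have hm'val : (m' : ℕ) = (m : ℕ) - 1 := rfl
  have hlastval : (lastI : ℕ) = n - 1 := rfl
  have hm'lt : m' < m := by rw [Fin.lt_def]; omega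
  have hm'last : m' < lastI := by rw [Fin.lt_def]; rw [hm'val, hlastval]; omega
  have hm'nem : m' ≠ m := ne_of_lt hm'lt
  have hm'nelast : m' ≠ lastI := ne_of_lt hm'last
  set p : Fin n → ℕ :=
    Function.update (Function.update (Function.update u m 0) m' (u m' + 1)) lastI (u m - 1)
    with hpdef
  have hpl : p lastI = u m - 1 := by rw [hpdef]; simp
  have hpm' : p m' = u m' + 1 := by
    rw [hpdef, Function.update_of_ne hm'nelast, Function.update_self]
  have hpm : m ≠ lastI → p m = 0 := by
    intro h
    rw [hpdef, Function.update_of_ne h, Function.update_of_ne (Ne.symm hm'nem),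
      Function.update_self]
  have hpother : ∀ j : Fin n, j ≠ lastI → j ≠ m' → j ≠ m → p j = u j := by
    intro j h1 h2 h3
    rw [hpdef, Function.update_of_ne h1, Function.update_of_ne h2, Function.update_of_ne h3]
  -- degree of p
  have hdeg2 : u m + u m' ≤ deg u := by
    have h1 := Finset.add_sum_erase Finset.univ u (Finset.mem_univ m)
    have h2 : u m' ≤ ∑ x ∈ Finset.univ.erase m, u x :=
      Finset.single_le_sum (fun _ _ => Nat.zero_le _)
        (Finset.mem_erase.mpr ⟨hm'nem, Finset.mem_univ _⟩)
    unfold deg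
    omega
  have hdegp : deg p = deg u := by
    rw [hpdef, deg_update, deg_update, deg_update]
    have h1 : Function.update (Function.update u m 0) m' (u m' + 1) lastI = 0 := by
      rw [Function.update_of_ne (Ne.symm hm'nelast)]
      by_cases h : lastI = m
      · rw [h, Function.update_self]
      · rw [Function.update_of_ne h]
        apply hzero
        rw [hlastval]
        have : (m : ℕ) ≠ n - 1 := fun hh => h (Fin.ext (by rw [hlastval]; omega))
        omega
    have h2 : Function.update u m 0 m' = u m' := by rw [Function.update_of_ne hm'nem]
    rw [h1, h2]
    omega
  have hpu : LexGT p u := by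
    refine ⟨m', ?_, ?_⟩
    · intro j hj
      have hj' : (j : ℕ) < (m : ℕ) - 1 := hj
      refine hpother j ?_ ?_ ?_ <;> intro hh <;> subst hh
      · rw [hlastval] at hj'; omega
      · rw [hm'val] at hj'; omega
      · omega
    · rw [hpm']; omega
  -- minimality
  have hmin : ∀ z : Fin n → ℕ, deg z = deg u → LexGT z u → LexGE z p := by
    rintro z hz ⟨i, hpre, hi⟩
    rcases lt_trichotomy i m' with him | him | him
    · -- i < m' : z beats u (hence p) at position i
      left
      refine ⟨i, ?_, ?_⟩
      · intro j hj
        have hj2 : j < m' := lt_trans hj him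
        rw [hpre j hj]
        refine (hpother j ?_ ?_ ?_).symm <;> intro hh <;> subst hh
        · exact absurd (lt_trans hj2 hm'last) (lt_irrefl _)
        · exact absurd hj2 (lt_irrefl _)
        · exact absurd (lt_trans hm'lt (lt_trans hj2 hm'lt)) (by
            rw [Fin.lt_def]; omega)
      · have : p i = u i := by
          refine hpother i ?_ ?_ ?_ <;> intro hh <;> subst hh
          · exact absurd (lt_trans him hm'last) (lt_irrefl _)
          · exact absurd him (lt_irrefl _)
          · exact absurd (lt_trans him hm'lt) (lt_irrefl _)
        omega
    · -- i = m'
      subst him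
      by_cases hz2 : u m' + 1 < z m'
      · left
        refine ⟨m', ?_, ?_⟩
        · intro j hj
          rw [hpre j hj]
          refine (hpother j ?_ ?_ ?_).symm <;> intro hh <;> subst hh
          · exact absurd (lt_trans hj hm'last) (lt_irrefl _)
          · exact absurd hj (lt_irrefl _)
          · exact absurd (lt_trans hm'lt hj) (lt_irrefl _)
        · rw [hpm']; omega
      · -- z i = u i + 1 exactly
        have hzi : z m' = u m' + 1 := by omega
        -- degree bookkeeping: tail of z sums to u m - 1
        have hsz := deg_split z m'
        have hsu := deg_split u m'
        have hpre' : (∑ j ∈ Finset.univ.filter (fun j => j < m'), z j)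
            = ∑ j ∈ Finset.univ.filter (fun j => j < m'), u j :=
          Finset.sum_congr rfl (fun j hj => hpre j (Finset.mem_filter.mp hj).2)
        have htu : (∑ j ∈ Finset.univ.filter (fun j => m' < j), u j) = u m := by
          apply Finset.sum_eq_single_of_mem m
            (Finset.mem_filter.mpr ⟨Finset.mem_univ _, hm'lt⟩)
          intro b hb hbm
          have hb' : m' < b := (Finset.mem_filter.mp hb).2
          have hb'' : (m : ℕ) - 1 < (b : ℕ) := hb'
          apply hzero
          have : (b : ℕ) ≠ (m : ℕ) := fun hh => hbm (Fin.ext hh)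
          omega
        have htz : (∑ j ∈ Finset.univ.filter (fun j => m' < j), z j) = u m - 1 := by
          omega
        -- compare tails
        set S : Finset (Fin n) :=
          Finset.univ.filter (fun j => m' < j ∧ j < lastI ∧ 0 < z j) with hSdef
        by_cases hS : S.Nonempty
        · left
          obtain ⟨hi0a, hi0b, hi0c⟩ :
              m' < S.min' hS ∧ S.min' hS < lastI ∧ 0 < z (S.min' hS) :=
            (Finset.mem_filter.mp (S.min'_mem hS)).2
          set i0 := S.min' hS
          have hmid : ∀ j : Fin n, m' < j → j < lastI → j ≠ lastI → p j = 0 := by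
            intro j hj1 hj2 hj3
            by_cases hjm : j = m
            · subst hjm; exact hpm (fun hh => absurd (hh ▸ hj2) (lt_irrefl _))
            · rw [hpother j hj3 (ne_of_gt hj1) hjm]
              apply hzero
              have h1 : (m : ℕ) - 1 < (j : ℕ) := hj1
              have h2 : (j : ℕ) ≠ (m : ℕ) := fun hh => hjm (Fin.ext hh)
              omega
          refine ⟨i0, ?_, ?_⟩
          · intro j hj
            rcases lt_trichotomy j m' with hj2 | hj2 | hj2
            · rw [hpre j hj2]
              refine (hpother j ?_ ?_ ?_).symm <;> intro hh <;> subst hh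
              · exact absurd (lt_trans hj2 hm'last) (lt_irrefl _)
              · exact absurd hj2 (lt_irrefl _)
              · exact absurd (lt_trans hm'lt hj2) (lt_irrefl _)
            · subst hj2; rw [hpm', hzi]
            · -- m' < j < i0 : z j = 0 = p j
              have hzj : z j = 0 := by
                by_contra hzj
                have hjS : j ∈ S := by
                  rw [hSdef, Finset.mem_filter]
                  exact ⟨Finset.mem_univ _, hj2, lt_trans hj hi0b,
                    Nat.pos_of_ne_zero hzj⟩
                exact absurd (S.min'_le j hjS) (not_le.mpr hj)
              rw [hzj, hmid j hj2 (lt_trans hj hi0b) (ne_of_lt (lt_trans hj hi0b))]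
          · rw [hmid i0 hi0a hi0b (ne_of_lt hi0b)]
            exact hi0c
        · -- S empty: z = p
          right
          rw [Finset.not_nonempty_iff_eq_empty] at hS
          have hzmid : ∀ j : Fin n, m' < j → j < lastI → z j = 0 := by
            intro j hj1 hj2
            by_contra hzj
            have : j ∈ S := by
              rw [hSdef, Finset.mem_filter]
              exact ⟨Finset.mem_univ _, hj1, hj2, Nat.pos_of_ne_zero hzj⟩
            rw [hS] at this
            exact absurd this (Finset.notMem_empty j)
          have hzl : z lastI = u m - 1 := by
            have := Finset.sum_eq_single_of_mem lastI
              (Finset.mem_filter.mpr ⟨Finset.mem_univ lastI, hm'last⟩)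
              (f := z) ?_
            · rw [← htz, this]
            · intro b hb hbl
              have hb1 : m' < b := (Finset.mem_filter.mp hb).2
              have hb2 : b < lastI := by
                rw [Fin.lt_def, hlastval]
                have := b.isLt
                have : (b : ℕ) ≠ n - 1 := fun hh => hbl (Fin.ext (by rw [hlastval]; omega))
                omega
              exact hzmid b hb1 hb2
          funext k
          rcases lt_trichotomy k m' with hk | hk | hk
          · rw [hpre k hk]
            refine (hpother k ?_ ?_ ?_).symm <;> intro hh <;> subst hh
            · exact absurd (lt_trans hk hm'last) (lt_irrefl _)
            · exact absurd hk (lt_irrefl _)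
            · exact absurd (lt_trans hm'lt hk) (lt_irrefl _)
          · subst hk; rw [hpm', hzi]
          · by_cases hkl : k = lastI
            · subst hkl; rw [hzl, hpl]
            · have hkl2 : k < lastI := by
                rw [Fin.lt_def, hlastval]
                have := k.isLt
                have : (k : ℕ) ≠ n - 1 := fun hh => hkl (Fin.ext (by rw [hlastval]; omega))
                omega
              rw [hzmid k hk hkl2]
              by_cases hkm : k = m
              · subst hkm
                exact (hpm (fun hh => absurd (hh ▸ hkl2) (lt_irrefl _))).symm
              · rw [hpother k hkl (ne_of_gt hk) hkm]
                apply (hzero k ?_).symm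
                have h1 : (m : ℕ) - 1 < (k : ℕ) := hk
                have h2 : (k : ℕ) ≠ (m : ℕ) := fun hh => hkm (Fin.ext hh)
                omega
    · -- m' < i : impossible
      exfalso
      have hiM : (m : ℕ) ≤ (i : ℕ) := by
        have : (m : ℕ) - 1 < (i : ℕ) := him
        omega
      have hsz := deg_split z i
      have hsu := deg_split u i
      have hpre' : (∑ j ∈ Finset.univ.filter (fun j => j < i), z j)
          = ∑ j ∈ Finset.univ.filter (fun j => j < i), u j :=
        Finset.sum_congr rfl (fun j hj => hpre j (Finset.mem_filter.mp hj).2)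
      have htu : (∑ j ∈ Finset.univ.filter (fun j => i < j), u j) = 0 := by
        apply Finset.sum_eq_zero
        intro j hj
        have hj' : i < j := (Finset.mem_filter.mp hj).2
        apply hzero
        have : (i : ℕ) < (j : ℕ) := hj'
        omega
      omega
  have hppred : IsPred p u := ⟨hdegp, hpu, hmin⟩
  have hwp : w = p := by
    have h1 : LexGE p w := hw.2.2 p hdegp hpu
    have h2 : LexGE w p := hmin w hw.1 hw.2.1
    rcases h2 with h2 | h2
    · rcases h1 with h1 | h1
      · exact absurd h1 (fun h => lexGT_asymm h2 h)
      · exact h1.symm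
    · exact h2
  rw [hwp]
  by_cases hcase : 2 ≤ u m
  · rw [if_pos hcase]
    have hres : maxIdx p = (lastI : ℕ) + 1 := by
      apply maxIdx_eq p lastI
      · rw [hpl]; omega
      · intro j _
        rw [Fin.le_def, hlastval]
        have := j.isLt
        omega
    rw [hres, hlastval]; omega
  · rw [if_neg hcase]
    have hum1 : u m = 1 := by omega
    have hres : maxIdx p = (m' : ℕ) + 1 := by
      apply maxIdx_eq p m'
      · rw [hpm']; omega
      · intro j hj
        by_cases h1 : j = lastI
        · subst h1; rw [hpl, hum1] at hj; omega
        · by_cases h2 : j = m'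
          · subst h2; exact le_refl _
          · by_cases h3 : j = m
            · subst h3
              by_cases h4 : j = lastI
              · exact absurd h4 h1
              · rw [hpm h4] at hj; omega
            · rw [hpother j h1 h2 h3] at hj
              have := hmax j hj
              rw [Fin.le_def, hm'val]
              have : (j : ℕ) ≠ (m : ℕ) := fun hh => h3 (Fin.ext hh)
              omega
    rw [hres, hm'val, hm]
    omega
end

section
/- For all 2 ≤ m ≤ n and all k ≥ 1, the maxgen monomial of the lexinterval {w of degree k : x_{m−1}^k >_lex w ≥_lex x_m^k} in n variables equals x_m^k · Π_{i=1}^{n−m} x_{m+i}^{binom(k−1+i, i+1)}. -/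
open Finset in
lemma card_piAntidiag' {ι : Type*} [DecidableEq ι] (s : Finset ι) (t : ℕ) :
    (Finset.piAntidiag s t).card = (s.card + t - 1).choose t := by
  classical
  have h1 : (Finset.piAntidiag s t).card
      = (Finset.piAntidiag (univ : Finset {x // x ∈ s}) t).card := by
    apply Finset.card_nbij' (fun f x => f x.val)
      (fun g i => if h : i ∈ s then g ⟨i, h⟩ else 0)
    · intro f hf
      simp only [mem_coe, mem_piAntidiag] at hf ⊢
      constructor
      · rw [← hf.1, Finset.sum_coe_sort s f]
      · intro i _; exact mem_univ i
    · intro g hg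
      simp only [mem_coe, mem_piAntidiag] at hg ⊢
      constructor
      · rw [← hg.1, ← Finset.sum_coe_sort s]
        apply Finset.sum_congr rfl
        intro x _
        simp [x.2]
      · intro i hi
        by_contra h
        simp [h] at hi
    · intro f hf
      simp only [mem_coe, mem_piAntidiag] at hf
      funext i
      by_cases h : i ∈ s
      · simp [h]
      · have : f i = 0 := by by_contra h'; exact h (hf.2 i h')
        simp [h, this]
    · intro g hg
      funext x
      simp [x.2]
  rw [h1, ← Finset.map_sym_eq_piAntidiag, Finset.card_map, Finset.sym_univ,
    ← Fintype.card, Sym.card_sym_eq_choose]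
  simp

lemma deg_single {n : ℕ} (i : Fin n) (k : ℕ) : deg (Pi.single i k) = k := by
  simp [deg]

lemma single_le_deg {n : ℕ} (v : Fin n → ℕ) (a : Fin n) : v a ≤ deg v :=
  Finset.single_le_sum (fun _ _ => Nat.zero_le _) (Finset.mem_univ a)

lemma pair_le_deg {n : ℕ} (v : Fin n → ℕ) {a b : Fin n} (hab : a ≠ b) :
    v a + v b ≤ deg v := by
  have h := Finset.sum_le_sum_of_subset (Finset.subset_univ ({a, b} : Finset (Fin n)))
    (f := v)
  rwa [Finset.sum_pair hab] at h

lemma maxIdx_eq_iff {n : ℕ} (v : Fin n → ℕ) (j : Fin n) :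
    maxIdx v = (j : ℕ) + 1 ↔ 0 < v j ∧ ∀ i, j < i → v i = 0 := by
  constructor
  · intro h
    have hne : (Finset.univ.filter fun i : Fin n => 0 < v i).Nonempty := by
      by_contra hne
      rw [Finset.not_nonempty_iff_eq_empty] at hne
      rw [maxIdx, hne] at h
      simp at h
    obtain ⟨i, hi, hsup⟩ :=
      Finset.exists_mem_eq_sup _ hne (fun i : Fin n => (i : ℕ) + 1)
    rw [maxIdx] at h
    rw [h] at hsup
    have hij : i = j := Fin.ext (by omega)
    subst hij
    simp only [Finset.mem_filter] at hi
    refine ⟨hi.2, fun i' hii' => ?_⟩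
    by_contra hvi'
    have hmem : i' ∈ Finset.univ.filter fun i : Fin n => 0 < v i := by
      simp [Nat.pos_of_ne_zero hvi']
    have h2 := Finset.le_sup (f := fun i : Fin n => (i : ℕ) + 1) hmem
    omega
  · rintro ⟨hj, hafter⟩
    apply le_antisymm
    · apply Finset.sup_le
      intro i hi
      simp only [Finset.mem_filter] at hi
      have : ¬ j < i := fun hc => by rw [hafter i hc] at hi; omega
      have : (i : ℕ) ≤ (j : ℕ) := by
        rcases lt_or_ge (i : ℕ) ((j : ℕ) + 1) with h | h
        · omega
        · exact absurd (by omega : j < i) this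
      omega
    · exact Finset.le_sup (f := fun i : Fin n => (i : ℕ) + 1) (by simp [hj])


lemma lstar_char {n k : ℕ} (hk : 1 ≤ k) (m : Fin n) (hm : 1 ≤ (m : ℕ))
    (mp : Fin n) (hmp : (mp : ℕ) = (m : ℕ) - 1) :
    Lstar (Pi.single mp k) (Pi.single m k)
      = {Pi.single m k} ∪
        {v | deg v = k ∧ (∀ i, i < mp → v i = 0) ∧ 1 ≤ v mp ∧ v mp < k} := by
  have hlt : mp < m := by
    rw [Fin.lt_def]; omega
  have hne : mp ≠ m := ne_of_lt hlt
  ext v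
  constructor
  · rintro ⟨hd, ⟨i, hpre, hvi⟩, hge⟩
    rw [deg_single] at hd
    have hi : i = mp := by
      by_contra h
      rw [Pi.single_eq_of_ne h] at hvi
      omega
    rw [hi] at hpre hvi
    rw [Pi.single_eq_same] at hvi
    have hzero : ∀ j, j < mp → v j = 0 := by
      intro j hj
      rw [← hpre j hj, Pi.single_eq_of_ne (ne_of_lt hj)]
    rcases hge with ⟨i2, hpre2, hvi2⟩ | heq
    · right
      have hi2 : i2 = mp := by
        rcases lt_trichotomy i2 mp with h | h | h
        · exfalso
          rw [hzero i2 h, Pi.single_apply] at hvi2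
          omega
        · exact h
        · exfalso
          have hvmp : v mp = 0 := by
            rw [hpre2 mp h, Pi.single_eq_of_ne hne]
          rcases lt_trichotomy i2 m with h2 | h2 | h2
          · rw [Fin.lt_def] at h h2; omega
          · subst h2
            rw [Pi.single_eq_same] at hvi2
            have := single_le_deg v i2
            omega
          · have hvm : v m = k := by
              rw [hpre2 m h2, Pi.single_eq_same]
            rw [Pi.single_eq_of_ne (ne_of_gt h2)] at hvi2
            have := pair_le_deg v (ne_of_lt h2)
            omega
      rw [hi2] at hvi2
      rw [Pi.single_eq_of_ne hne] at hvi2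
      exact ⟨hd, hzero, by omega, hvi⟩
    · left; exact heq
  · intro hv
    rcases hv with heq | ⟨hd, hzero, h1, h2⟩
    · rw [Set.mem_singleton_iff] at heq
      subst heq
      refine ⟨by rw [deg_single, deg_single], ⟨mp, fun j hj => ?_, ?_⟩, Or.inr rfl⟩
      · rw [Pi.single_eq_of_ne (ne_of_lt hj),
          Pi.single_eq_of_ne (ne_of_lt (lt_trans hj hlt))]
      · rw [Pi.single_eq_same, Pi.single_eq_of_ne hne]
        omega
    · refine ⟨by rw [deg_single]; exact hd, ⟨mp, fun j hj => ?_, ?_⟩, Or.inl ⟨mp, fun j hj => ?_, ?_⟩⟩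
      · rw [Pi.single_eq_of_ne (ne_of_lt hj), hzero j hj]
      · rw [Pi.single_eq_same]; exact h2
      · rw [hzero j hj, Pi.single_eq_of_ne (ne_of_lt (lt_trans hj hlt))]
      · rw [Pi.single_eq_of_ne hne]; omega


lemma T_eq {n k : ℕ} (hk : 2 ≤ k) (mp j : Fin n) (hmpj : mp < j) :
    {v : Fin n → ℕ | deg v = k ∧ (∀ i, i < mp → v i = 0) ∧ 1 ≤ v mp ∧ 1 ≤ v j ∧
        ∀ i, j < i → v i = 0}
      = (fun f => f + Pi.single mp 1 + Pi.single j 1) ''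
          (↑(Finset.piAntidiag (Finset.Icc mp j) (k - 2)) : Set (Fin n → ℕ)) := by
  have hne : mp ≠ j := ne_of_lt hmpj
  have hsum_single : ∀ (a : Fin n), ∑ i, Pi.single a 1 i = 1 := by
    intro a
    simpa [deg] using deg_single a 1
  ext v
  simp only [Set.mem_setOf_eq, Set.mem_image, Finset.coe_sort_coe, Finset.mem_coe,
    Finset.mem_piAntidiag]
  constructor
  · rintro ⟨hd, hbefore, hmp1, hj1, hafter⟩
    have hle : ∀ i : Fin n,
        (Pi.single mp 1 : Fin n → ℕ) i + (Pi.single j 1 : Fin n → ℕ) i ≤ v i := by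
      intro i
      rcases eq_or_ne i mp with rfl | h1
      · rw [Pi.single_eq_same, Pi.single_eq_of_ne hne]; omega
      · rcases eq_or_ne i j with rfl | h2
        · rw [Pi.single_eq_same, Pi.single_eq_of_ne (Ne.symm hne)]; omega
        · rw [Pi.single_eq_of_ne h1, Pi.single_eq_of_ne h2]; omega
    refine ⟨fun i => v i - (Pi.single mp 1 : Fin n → ℕ) i - (Pi.single j 1 : Fin n → ℕ) i, ⟨?_, ?_⟩, ?_⟩
    · have hout : ∀ i ∈ Finset.univ, i ∉ Finset.Icc mp j →
          v i - (Pi.single mp 1 : Fin n → ℕ) i - (Pi.single j 1 : Fin n → ℕ) i = 0 := by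
        intro i _ hi
        rw [Finset.mem_Icc, not_and_or] at hi
        rcases hi with hi | hi
        · rw [hbefore i (lt_of_not_ge hi)]; omega
        · rw [hafter i (lt_of_not_ge hi)]; omega
      rw [Finset.sum_subset (Finset.subset_univ _) hout]
      have h1 : ∀ x ∈ Finset.univ,
          (Pi.single j 1 : Fin n → ℕ) x ≤ v x - (Pi.single mp 1 : Fin n → ℕ) x := by
        intro x _
        have := hle x
        omega
      have h2 : ∀ x ∈ Finset.univ, (Pi.single mp 1 : Fin n → ℕ) x ≤ v x := by
        intro x _
        have := hle x
        omega
      rw [Finset.sum_tsub_distrib _ h1, Finset.sum_tsub_distrib _ h2, hsum_single,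
        hsum_single]
      have : ∑ i, v i = k := hd
      omega
    · intro i hi
      have hvi : v i ≠ 0 := by
        intro h
        apply hi
        simp [h]
      rw [Finset.mem_Icc]
      constructor
      · by_contra h
        exact hvi (hbefore i (by omega))
      · by_contra h
        exact hvi (hafter i (by omega))
    · funext i
      simp only [Pi.add_apply]
      rcases eq_or_ne i mp with rfl | h1
      · rw [Pi.single_eq_same, Pi.single_eq_of_ne hne]
        omega
      · rcases eq_or_ne i j with rfl | h2
        · rw [Pi.single_eq_same, Pi.single_eq_of_ne (Ne.symm hne)]
          omega
        · rw [Pi.single_eq_of_ne h1, Pi.single_eq_of_ne h2]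
          omega
  · rintro ⟨f, ⟨hsum, hsupp⟩, rfl⟩
    have hsum_univ : ∑ i, f i = k - 2 := by
      rw [← hsum]
      symm
      apply Finset.sum_subset (Finset.subset_univ _)
      intro i _ hi
      by_contra h
      exact hi (hsupp i h)
    have hdeg : deg (f + Pi.single mp 1 + Pi.single j 1) = k := by
      simp only [deg, Pi.add_apply, Finset.sum_add_distrib, hsum_univ, hsum_single]
      omega
    refine ⟨hdeg, fun i hi => ?_, ?_, ?_, fun i hi => ?_⟩
    · have hf : f i = 0 := by
        by_contra h
        have := Finset.mem_Icc.mp (hsupp i h)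
        exact absurd this.1 (not_le_of_gt hi)
      simp only [Pi.add_apply, hf,
        Pi.single_eq_of_ne (ne_of_lt hi),
        Pi.single_eq_of_ne (ne_of_lt (lt_trans hi hmpj))]
      omega
    · simp only [Pi.add_apply, Pi.single_eq_same]
      omega
    · simp only [Pi.add_apply, Pi.single_eq_same]
      omega
    · have hf : f i = 0 := by
        by_contra h
        have := Finset.mem_Icc.mp (hsupp i h)
        exact absurd this.2 (not_le_of_gt hi)
      simp only [Pi.add_apply, hf,
        Pi.single_eq_of_ne (ne_of_gt (lt_trans hmpj hi)),
        Pi.single_eq_of_ne (ne_of_gt hi)]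
      omega


lemma T_finite {n k : ℕ} (hk : 2 ≤ k) (mp j : Fin n) (hmpj : mp < j) :
    {v : Fin n → ℕ | deg v = k ∧ (∀ i, i < mp → v i = 0) ∧ 1 ≤ v mp ∧ 1 ≤ v j ∧
        ∀ i, j < i → v i = 0}.Finite := by
  rw [T_eq hk mp j hmpj]
  exact (Finset.finite_toSet _).image _

lemma count_T {n k : ℕ} (hk : 2 ≤ k) (mp j : Fin n) (hmpj : mp < j) :
    {v : Fin n → ℕ | deg v = k ∧ (∀ i, i < mp → v i = 0) ∧ 1 ≤ v mp ∧ 1 ≤ v j ∧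
        ∀ i, j < i → v i = 0}.ncard
      = ((j : ℕ) - (mp : ℕ) + k - 2).choose (k - 2) := by
  rw [T_eq hk mp j hmpj]
  have hinj : Function.Injective
      (fun f : Fin n → ℕ => f + Pi.single mp 1 + Pi.single j 1) := by
    intro f g h
    funext i
    have := congrFun h i
    simp only [Pi.add_apply] at this
    omega
  rw [Set.ncard_image_of_injective _ hinj, Set.ncard_coe_finset, card_piAntidiag',
    Fin.card_Icc]
  have hlt : (mp : ℕ) < (j : ℕ) := hmpj
  congr 1
  omega

lemma maxIdx_single {n k : ℕ} (hk : 1 ≤ k) (m : Fin n) :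
    maxIdx (Pi.single m k) = (m : ℕ) + 1 := by
  rw [maxIdx_eq_iff]
  refine ⟨by rw [Pi.single_eq_same]; omega, fun i hi => Pi.single_eq_of_ne (M := fun _ : Fin n => ℕ) (ne_of_gt hi) k⟩

/-- for `2 ≤ m ≤ n`, `k ≥ 1` (here `m` is the 1-based index `(m:ℕ)+1`
of the Fin-indexed variable `m`, and `mp` is the variable `x_{m-1}`),
`maxgen(L*(x_{m-1}^k, x_m^k)) = x_m^k · Π_{i=1}^{n-m} x_{m+i}^{C(k-1+i, i+1)}`. -/
theorem stmt17 {n k : ℕ} (hk : 1 ≤ k) (m : Fin n) (hm : 1 ≤ (m : ℕ))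
    (mp : Fin n) (hmp : (mp : ℕ) = (m : ℕ) - 1) :
    maxgen (Lstar (Pi.single mp k) (Pi.single m k))
      = fun j : Fin n =>
          if (j : ℕ) = (m : ℕ) then k
          else if (m : ℕ) < (j : ℕ) then
            Nat.choose (k - 1 + ((j : ℕ) - (m : ℕ))) (((j : ℕ) - (m : ℕ)) + 1)
          else 0 := by
  have hltm : mp < m := by rw [Fin.lt_def]; omega
  have hnem : mp ≠ m := ne_of_lt hltm
  have hchar := lstar_char hk m hm mp hmp
  funext j
  simp only [maxgen, hchar]
  by_cases hjm : (j : ℕ) = (m : ℕ)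
  · rw [if_pos hjm]
    have hj : j = m := Fin.ext hjm
    subst hj
    have hset : ({Pi.single j k} ∪
          {v | deg v = k ∧ (∀ i, i < mp → v i = 0) ∧ 1 ≤ v mp ∧ v mp < k}) ∩
          {w | maxIdx w = (j : ℕ) + 1}
        = {Pi.single j k} ∪
          {v : Fin n → ℕ | deg v = k ∧ (∀ i, i < mp → v i = 0) ∧ 1 ≤ v mp ∧ 1 ≤ v j ∧
            ∀ i, j < i → v i = 0} := by
      ext w
      constructor
      · rintro ⟨hmem, hmax⟩
        rw [Set.mem_setOf_eq, maxIdx_eq_iff] at hmax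
        rcases hmem with h | ⟨hd, hb, h1, h2⟩
        · exact Or.inl h
        · exact Or.inr ⟨hd, hb, h1, hmax.1, hmax.2⟩
      · rintro (h | ⟨hd, hb, h1, h2, h3⟩)
        · rw [Set.mem_singleton_iff] at h
          subst h
          exact ⟨Or.inl rfl, (maxIdx_eq_iff _ _).2 ⟨by rw [Pi.single_eq_same]; omega,
            fun i hi => Pi.single_eq_of_ne (M := fun _ : Fin n => ℕ) (ne_of_gt hi) k⟩⟩
        · have hpair := pair_le_deg w hnem
          rw [hd] at hpair
          exact ⟨Or.inr ⟨hd, hb, h1, by omega⟩, (maxIdx_eq_iff _ _).2 ⟨h2, h3⟩⟩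
    rw [hset]
    rcases eq_or_lt_of_le hk with hk1 | hk2
    · have hTempty : {v : Fin n → ℕ | deg v = k ∧ (∀ i, i < mp → v i = 0) ∧ 1 ≤ v mp ∧
          1 ≤ v j ∧ ∀ i, j < i → v i = 0} = ∅ := by
        ext v
        simp only [Set.mem_setOf_eq, Set.mem_empty_iff_false, iff_false]
        rintro ⟨hd, hb, h1, h2, h3⟩
        have hpair := pair_le_deg v hnem
        rw [hd] at hpair
        omega
      rw [hTempty, Set.union_empty, Set.ncard_singleton]
      omega
    · have hdisj : Disjoint ({Pi.single j k} : Set (Fin n → ℕ))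
          {v : Fin n → ℕ | deg v = k ∧ (∀ i, i < mp → v i = 0) ∧ 1 ≤ v mp ∧ 1 ≤ v j ∧
            ∀ i, j < i → v i = 0} := by
        rw [Set.disjoint_left]
        rintro a ha hamem
        rw [Set.mem_singleton_iff] at ha
        subst ha
        obtain ⟨_, _, h1, _⟩ := hamem
        rw [Pi.single_eq_of_ne hnem] at h1
        omega
      rw [Set.ncard_union_eq hdisj (Set.finite_singleton _) (T_finite hk2 mp j hltm),
        Set.ncard_singleton, count_T hk2 mp j hltm]
      have h1 : (j : ℕ) - (mp : ℕ) + k - 2 = k - 1 := by omega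
      rw [h1, show k - 2 = (k - 1) - 1 by omega, Nat.choose_symm (by omega),
        Nat.choose_one_right]
      omega
  · rw [if_neg hjm]
    rcases lt_or_ge (m : ℕ) (j : ℕ) with hlt | hge
    · rw [if_pos hlt]
      have hmj : m < j := by rw [Fin.lt_def]; exact hlt
      have hmpj : mp < j := lt_trans hltm hmj
      have hnej : mp ≠ j := ne_of_lt hmpj
      have hset : ({Pi.single m k} ∪
            {v | deg v = k ∧ (∀ i, i < mp → v i = 0) ∧ 1 ≤ v mp ∧ v mp < k}) ∩
            {w | maxIdx w = (j : ℕ) + 1}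
          = {v : Fin n → ℕ | deg v = k ∧ (∀ i, i < mp → v i = 0) ∧ 1 ≤ v mp ∧ 1 ≤ v j ∧
              ∀ i, j < i → v i = 0} := by
        ext w
        constructor
        · rintro ⟨hmem, hmax⟩
          rw [Set.mem_setOf_eq, maxIdx_eq_iff] at hmax
          rcases hmem with h | ⟨hd, hb, h1, h2⟩
          · exfalso
            rw [Set.mem_singleton_iff] at h
            subst h
            have hz : (Pi.single m k : Fin n → ℕ) j = 0 := by
              rw [Pi.single_eq_of_ne (ne_of_gt hmj)]
            have := hmax.1
            omega
          · exact ⟨hd, hb, h1, hmax.1, hmax.2⟩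
        · rintro ⟨hd, hb, h1, h2, h3⟩
          have hpair := pair_le_deg w hnej
          rw [hd] at hpair
          exact ⟨Or.inr ⟨hd, hb, h1, by omega⟩, (maxIdx_eq_iff _ _).2 ⟨h2, h3⟩⟩
      rw [hset]
      rcases eq_or_lt_of_le hk with hk1 | hk2
      · have hTempty : {v : Fin n → ℕ | deg v = k ∧ (∀ i, i < mp → v i = 0) ∧ 1 ≤ v mp ∧
            1 ≤ v j ∧ ∀ i, j < i → v i = 0} = ∅ := by
          ext v
          simp only [Set.mem_setOf_eq, Set.mem_empty_iff_false, iff_false]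
          rintro ⟨hd, hb, h1, h2, h3⟩
          have hpair := pair_le_deg v hnej
          rw [hd] at hpair
          omega
        rw [hTempty, Set.ncard_empty]
        symm
        apply Nat.choose_eq_zero_of_lt
        omega
      · rw [count_T hk2 mp j hmpj]
        have harg : (j : ℕ) - (mp : ℕ) + k - 2 = k - 1 + ((j : ℕ) - (m : ℕ)) := by omega
        rw [harg,
          show k - 2 = (k - 1 + ((j : ℕ) - (m : ℕ))) - (((j : ℕ) - (m : ℕ)) + 1) by omega]
        exact Nat.choose_symm (by omega)
    · rw [if_neg (not_lt.2 hge)]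
      have hset : ({Pi.single m k} ∪
            {v | deg v = k ∧ (∀ i, i < mp → v i = 0) ∧ 1 ≤ v mp ∧ v mp < k}) ∩
            {w | maxIdx w = (j : ℕ) + 1} = ∅ := by
        ext w
        simp only [Set.mem_inter_iff, Set.mem_empty_iff_false, iff_false]
        rintro ⟨hmem, hmax⟩
        rw [Set.mem_setOf_eq, maxIdx_eq_iff] at hmax
        rcases hmem with h | ⟨hd, hb, h1, h2⟩
        · rw [Set.mem_singleton_iff] at h
          subst h
          have hz : (Pi.single m k : Fin n → ℕ) j = 0 := by
            rw [Pi.single_eq_of_ne (fun h' : j = m => hjm (congrArg Fin.val h'))]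
          have := hmax.1
          omega
        · have hj_le : (j : ℕ) ≤ (mp : ℕ) := by omega
          rcases lt_or_eq_of_le hj_le with h' | h'
          · have hz : w j = 0 := hb j (by rw [Fin.lt_def]; exact h')
            have := hmax.1
            omega
          · have hjmp : j = mp := Fin.ext h'
            have hdeg : deg w = w mp := by
              rw [deg]
              apply Finset.sum_eq_single mp
              · intro i _ hi
                rcases lt_or_gt_of_ne hi with h2' | h2'
                · exact hb i h2'
                · exact hmax.2 i (by rw [hjmp]; exact h2')
              · intro h
                exact absurd (Finset.mem_univ mp) h
            omega
      rw [hset, Set.ncard_empty]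
end
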